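/- arXiv:math/0311076 — 2 statements merged into one kernel-verified Lean document; each statement's English description precedes it below -/
import Mathlib

section
/- Let M be a Coxeter matrix on a type S with associated Coxeter system (W, cs), and let (w_1, …, w_r) be a word in S such that some s ∈ S appears exactly once among its letters (i.e., #{i : w_i = s} = 1). Then cs.simple w_1 · … · cs.simple w_r ≠ 1 in W. -/
/-!
If `l = a ++ s :: b` with `s ∉ a ++ b` and `cs.wordProd l = 1`, then `cs.wordProd (b ++ a)`
is the simple reflection `s` written as a product of the other simple reflections. This is
impossible in the geometric representation of `W` on `ℝ^(S)`: there the simple reflection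
`σᵢ` changes only the `i`-th coordinate, so such a product preserves the `s`-coordinate of `e_s`,
whereas `σ_s e_s = -e_s`. The Coxeter relations `(σᵢ σⱼ)^m = 1` of this representation come from
Mathlib's Chebyshev formula for powers of a product of two reflections: the relevant
`S`-polynomials vanish at `2 cos (2π / m)` when `m ≥ 3`.
-/

open Module Real Polynomial.Chebyshev

lemma Real.sin_two_pi_div_ne_zero {m : ℕ} (hm : 2 < m) : sin (2 * π / m) ≠ 0 := by
  have hm' : (2 : ℝ) < m := by exact_mod_cast hm
  refine (sin_pos_of_pos_of_lt_pi (by positivity) ?_).ne'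
  rw [div_lt_iff₀ (by linarith)]
  nlinarith [pi_pos]

namespace Polynomial.Chebyshev

lemma S_eval_two_mul_cos_eq_zero {φ : ℝ} (hφ : sin φ ≠ 0) {n : ℤ}
    (hn : sin ((n + 1) * φ) = 0) : (S ℝ n).eval (2 * cos φ) = 0 := by
  rw [← S_two_mul_real_cos] at hn
  exact (mul_eq_zero.mp hn).resolve_right hφ

lemma S_sub_one_eval_two_mul_cos_two_pi_div {k : ℕ} (hk : 2 ≤ k) :
    (S ℝ (k - 1)).eval (2 * cos (2 * π / ↑(2 * k))) = 0 := by
  refine S_eval_two_mul_cos_eq_zero (sin_two_pi_div_ne_zero (by omega)) ?_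
  have : (k : ℝ) ≠ 0 := by positivity
  rw [show ((k - 1 : ℤ) + 1 : ℝ) * (2 * π / ↑(2 * k)) = π by push_cast; field_simp; ring]
  exact sin_pi

lemma S_add_S_sub_one_eval_two_mul_cos_two_pi_div {k : ℕ} (hk : 1 ≤ k) :
    (S ℝ k).eval (2 * cos (2 * π / ↑(2 * k + 1)))
      + (S ℝ (k - 1)).eval (2 * cos (2 * π / ↑(2 * k + 1))) = 0 := by
  refine (mul_eq_zero.mp ?_).resolve_right (sin_two_pi_div_ne_zero (m := 2 * k + 1) (by omega))
  rw [add_mul, S_two_mul_real_cos, S_two_mul_real_cos]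
  have : (2 * k + 1 : ℝ) ≠ 0 := by positivity
  rw [show ((k : ℤ) + 1 : ℝ) * (2 * π / ↑(2 * k + 1))
      = 2 * π - ((k - 1 : ℤ) + 1 : ℝ) * (2 * π / ↑(2 * k + 1)) by push_cast; field_simp; ring,
    sin_two_pi_sub, neg_add_cancel]

end Polynomial.Chebyshev

theorem Module.reflection_mul_reflection_pow_eq_one {V : Type*} [AddCommGroup V] [Module ℝ V]
    {x y : V} {f g : Dual ℝ V} (hf : f x = 2) (hg : g y = 2) {m : ℕ} (hm : 2 ≤ m)
    (hfy : f y = -2 * cos (π / m)) (hgx : g x = -2 * cos (π / m)) :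
    (reflection hf * reflection hg) ^ m = 1 := by
  apply LinearEquiv.toLinearMap_injective
  have ht : 2 * cos (2 * π / m) = f y * g x - 2 := by
    rw [hfy, hgx, mul_div_assoc, cos_two_mul]; ring
  rw [reflection_mul_reflection_pow hf hg m _ ht]
  obtain ⟨k, rfl | rfl⟩ := Nat.even_or_odd' m
  · obtain rfl | hk := eq_or_ne k 1
    · -- At `t = -2` the `S`-polynomials do not vanish, but the two correction terms cancel.
      simp only [mul_one, Nat.cast_ofNat, cos_pi_div_two, mul_zero] at hfy hgx
      ext v
      simp [hfy, hgx]
      module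
    rw [show ((2 * k : ℕ) - 2 : ℤ) / 2 = k - 1 by omega,
      show ((2 * k : ℕ) - 1 : ℤ) / 2 = k - 1 by omega,
      S_sub_one_eval_two_mul_cos_two_pi_div (by omega)]
    simp
  · rw [show ((2 * k + 1 : ℕ) - 2 : ℤ) / 2 = k - 1 by omega,
      show ((2 * k + 1 : ℕ) - 1 : ℤ) / 2 = k by omega,
      show ((2 * k + 1 : ℕ) - 3 : ℤ) / 2 = k - 1 by omega,
      show ((2 * k + 1 : ℕ) : ℤ) / 2 = k by omega,
      S_add_S_sub_one_eval_two_mul_cos_two_pi_div (by omega)]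
    simp

namespace CoxeterMatrix

variable {S : Type*} (M : CoxeterMatrix S)

/-- For `M i j = 0`, i.e. `m = ∞`, the junk value `π / 0 = 0` yields the standard entry
`-2 * cos 0 = -2`. -/
noncomputable def coroot (i : S) : Dual ℝ (S →₀ ℝ) :=
  Finsupp.linearCombination ℝ fun j ↦ -2 * cos (π / M i j)

lemma coroot_single (i j : S) : M.coroot i (Finsupp.single j 1) = -2 * cos (π / M i j) := by
  simp [coroot]

lemma coroot_single_self (i : S) : M.coroot i (Finsupp.single i 1) = 2 := by
  simp [coroot_single]

noncomputable def geometricReflection (i : S) : (S →₀ ℝ) ≃ₗ[ℝ] (S →₀ ℝ) :=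
  reflection (M.coroot_single_self i)

lemma geometricReflection_apply_of_ne {i s : S} (h : i ≠ s) (v : S →₀ ℝ) :
    M.geometricReflection i v s = v s := by
  simp [geometricReflection, reflection_apply, h]

lemma geometricReflection_single_self (i : S) :
    M.geometricReflection i (Finsupp.single i 1) = -Finsupp.single i 1 :=
  reflection_apply_self _

theorem isLiftable_geometricReflection : M.IsLiftable M.geometricReflection := by
  intro i j
  obtain rfl | hij := eq_or_ne i j
  · rw [M.diagonal, pow_one, mul_eq_one_iff_inv_eq, geometricReflection, reflection_inv]
  obtain hm | hm := eq_or_ne (M i j) 0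
  · rw [hm, pow_zero]
  have := M.off_diagonal i j hij
  exact reflection_mul_reflection_pow_eq_one _ _ (by omega) (M.coroot_single i j)
    (by rw [coroot_single, M.symmetric])

end CoxeterMatrix

namespace CoxeterSystem

variable {S W : Type*} {M : CoxeterMatrix S} [Group W] (cs : CoxeterSystem M W)

noncomputable def geometricRepresentation : W →* (S →₀ ℝ) ≃ₗ[ℝ] (S →₀ ℝ) :=
  cs.lift ⟨M.geometricReflection, M.isLiftable_geometricReflection⟩

lemma geometricRepresentation_simple (i : S) :
    cs.geometricRepresentation (cs.simple i) = M.geometricReflection i :=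
  cs.lift_apply_simple _ i

lemma geometricRepresentation_wordProd_apply_of_notMem {s : S} {ω : List S} (hs : s ∉ ω)
    (v : S →₀ ℝ) : cs.geometricRepresentation (cs.wordProd ω) v s = v s := by
  induction ω with
  | nil => simp
  | cons i ω ih =>
    rw [List.mem_cons, not_or] at hs
    rw [wordProd_cons, map_mul, LinearEquiv.mul_apply, geometricRepresentation_simple,
      M.geometricReflection_apply_of_ne (Ne.symm hs.1), ih hs.2]

theorem wordProd_ne_simple_of_notMem {s : S} {ω : List S} (hs : s ∉ ω) :
    cs.wordProd ω ≠ cs.simple s := by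
  intro h
  have := cs.geometricRepresentation_wordProd_apply_of_notMem hs (Finsupp.single s 1)
  rw [h, geometricRepresentation_simple, M.geometricReflection_single_self] at this
  norm_num at this

end CoxeterSystem

/-- Let `(W, cs)` be the Coxeter system of a Coxeter matrix `M` on `S`.  If the letter `s`
appears exactly once in the word `l = (w₁, …, w_r)`, then `w₁ ⋯ w_r ≠ 1` in `W`. -/
theorem wordProd_ne_one_of_count_eq_one {S : Type*} [DecidableEq S] {M : CoxeterMatrix S}
    {W : Type*} [Group W] (cs : CoxeterSystem M W)
    (l : List S) (s : S) (hcount : l.count s = 1) :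
    cs.wordProd l ≠ 1 := by
  obtain ⟨a, b, rfl⟩ := List.append_of_mem (List.count_pos_iff.mp (by omega : 0 < l.count s))
  rw [List.count_append, List.count_cons_self] at hcount
  have hs : s ∉ b ++ a := by
    rw [List.mem_append, ← List.count_pos_iff, ← List.count_pos_iff]
    omega
  intro h
  rw [CoxeterSystem.wordProd_append, CoxeterSystem.wordProd_cons] at h
  refine cs.wordProd_ne_simple_of_notMem hs ?_
  rw [CoxeterSystem.wordProd_append, ← cs.inv_simple]
  calc cs.wordProd b * cs.wordProd a
      = (cs.simple s)⁻¹ * (cs.simple s * cs.wordProd b) * cs.wordProd a := by group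
    _ = (cs.simple s)⁻¹ := by rw [eq_inv_of_mul_eq_one_right h]; group
end

section
/- Let M be a Coxeter matrix on a countable type S with M s t = 0 or M s t ≥ 4 for all s ≠ t (extra-large type, 0 encoding ∞), let A be the associated Artin group with generators a : S → A, and let (a_{i_1}^{ε_1}, …, a_{i_k}^{ε_k}) be a word in the generators and their inverses (ε_j ∈ {+1, −1}) whose associated partition of {1, …, k} contains a one-element block (i.e., some letter index appears exactly once among i_1, …, i_k). Then a_{i_1}^{ε_1} · … · a_{i_k}^{ε_k} ≠ 1 in A. -/
open Filter Topology

/-- The alternating word `s·t·s·t·⋯` with `m` factors (starting with `s`), as an element of the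
free group on `S`. -/
def artinAltWord {S : Type*} (s t : S) (m : ℕ) : FreeGroup S :=
  (List.ofFn fun j : Fin m => FreeGroup.of (if (j : ℕ) % 2 = 0 then s else t)).prod

/-- The Artin relators associated to a Coxeter matrix `M` : for each pair `s ≠ t` with
`2 ≤ M s t` (finite), the relator `alt(s, t, M s t) · alt(t, s, M s t)⁻¹` expressing
`s·t·s·⋯ = t·s·t·⋯` (both sides with `M s t` factors). -/
def artinRelators {S : Type*} (M : CoxeterMatrix S) : Set (FreeGroup S) :=
  {x | ∃ s t : S, s ≠ t ∧ 2 ≤ M s t ∧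
    x = artinAltWord s t (M s t) * (artinAltWord t s (M s t))⁻¹}

/-- The Artin group associated to a Coxeter matrix `M`. -/
abbrev ArtinGroup {S : Type*} (M : CoxeterMatrix S) : Type _ :=
  PresentedGroup (artinRelators M)

/-- The generators of the Artin group associated to `M`. -/
def artinGen {S : Type*} (M : CoxeterMatrix S) (s : S) : ArtinGroup M :=
  PresentedGroup.of s

/-!
The Artin group maps onto the Coxeter group `W`, which acts on `S → ℝ` by the transpose of its
Tits representation, `σ_s φ = φ - 2 φ(s) B(e_s, ·)`. For `t ≠ s₀` the reflection `σ_t` fixes the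
coordinate function `δ_{s₀}`, whereas `σ_{s₀} δ_{s₀}` takes the value `-1` at `s₀`. A word in which
`s₀` occurs once is `u a_{s₀}^{±1} v` with `u`, `v` in the stabilizer of `δ_{s₀}`, so its image
moves `δ_{s₀}` and the word is nontrivial.

The Coxeter relation `(σ_s σ_t)^m = 1` holds because `σ_s σ_t` only adds vectors of the plane
spanned by `B(e_s, ·)` and `B(e_t, ·)`, and in a suitable complex coordinate on that plane it is
multiplication by `e^{2πi/m}`.
-/

open Real Complex

theorem Subgroup.list_prod_ofFn_mem_iff {G : Type*} [Group G] (H : Subgroup G) {n : ℕ}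
    (g : Fin n → G) (j₀ : Fin n) (hg : ∀ j, j ≠ j₀ → g j ∈ H) :
    (List.ofFn g).prod ∈ H ↔ g j₀ ∈ H := by
  induction n with
  | zero => exact j₀.elim0
  | succ n ih =>
    rw [List.ofFn_succ, List.prod_cons]
    rcases Fin.eq_zero_or_eq_succ j₀ with rfl | ⟨j₁, rfl⟩
    · refine H.mul_mem_cancel_right (H.list_prod_mem fun x hx => ?_)
      obtain ⟨j, rfl⟩ := List.mem_ofFn.mp hx
      exact hg _ (Fin.succ_ne_zero j)
    · rw [H.mul_mem_cancel_left (hg 0 (Fin.succ_ne_zero j₁).symm)]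
      exact ih _ j₁ fun j hj => hg _ (Fin.succ_injective _ |>.ne hj)

theorem artinAltWord_succ {S : Type*} (s t : S) (m : ℕ) :
    artinAltWord s t (m + 1) = FreeGroup.of s * artinAltWord t s m := by
  rw [artinAltWord, List.ofFn_succ, List.prod_cons, artinAltWord]
  refine congrArg _ (congrArg _ (congrArg _ (funext fun j => ?_)))
  simp only [Fin.val_succ]
  split_ifs <;> first | rfl | omega

namespace CoxeterSystem

variable {S W : Type*} [Group W] {M : CoxeterMatrix S} (cs : CoxeterSystem M W)

theorem lift_simple_artinAltWord (s t : S) (m : ℕ) :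
    FreeGroup.lift cs.simple (artinAltWord s t m) = (cs.wordProd (alternatingWord t s m))⁻¹ := by
  induction m generalizing s t with
  | zero => simp [artinAltWord, alternatingWord]
  | succ m ih =>
    rw [artinAltWord_succ, map_mul, FreeGroup.lift_apply_of, ih, alternatingWord_succ,
      wordProd_concat, mul_inv_rev, inv_simple]

theorem lift_simple_artinRelator {r : FreeGroup S} (hr : r ∈ artinRelators M) :
    FreeGroup.lift cs.simple r = 1 := by
  obtain ⟨s, t, -, -, rfl⟩ := hr
  rw [map_mul, map_inv, lift_simple_artinAltWord, lift_simple_artinAltWord, inv_inv,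
    inv_mul_eq_one]
  simpa only [braidWord, M.symmetric t s] using cs.wordProd_braidWord_eq t s

def artinGroupHom : ArtinGroup M →* W :=
  PresentedGroup.toGroup fun _ => cs.lift_simple_artinRelator

@[simp]
theorem artinGroupHom_artinGen (s : S) : cs.artinGroupHom (artinGen M s) = cs.simple s :=
  PresentedGroup.toGroup.of _

end CoxeterSystem

theorem two_cos_mul_exp_mul_I (θ : ℝ) :
    2 * (Real.cos θ : ℂ) * exp (θ * I) = exp (θ * I) ^ 2 + 1 := by
  have h : exp (-θ * I) * exp (θ * I) = 1 := by rw [← Complex.exp_add]; simp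
  rw [ofReal_cos, two_cos]
  linear_combination h

namespace CoxeterMatrix

variable {S : Type*} (M : CoxeterMatrix S)

/-- The entries `B(e_s, e_t) = -cos (π / M s t)` of the Tits form. For `M s t = 0`, i.e. `m = ∞`,
the junk value `π / 0 = 0` yields the standard entry `-1`. -/
noncomputable def titsForm (s t : S) : ℝ := -Real.cos (π / M s t)

@[simp]
theorem titsForm_self (s : S) : M.titsForm s s = 1 := by
  simp [titsForm]

theorem titsForm_comm (s t : S) : M.titsForm s t = M.titsForm t s := by
  rw [titsForm, titsForm, M.symmetric]

/-- The transpose of the Tits reflection `v ↦ v - 2 B(e_s, v) e_s`, acting on `S → ℝ`, the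
algebraic dual of the Tits representation `S →₀ ℝ`. -/
noncomputable def dualReflection (s : S) : Equiv.Perm (S → ℝ) :=
  Function.Involutive.toPerm (fun φ => φ - (2 * φ s) • M.titsForm s) fun φ => by
    ext t
    simp only [Pi.sub_apply, Pi.smul_apply, smul_eq_mul, titsForm_self]
    ring

theorem dualReflection_apply (s : S) (φ : S → ℝ) :
    M.dualReflection s φ = φ - (2 * φ s) • M.titsForm s :=
  rfl

theorem dualReflection_sub_self_mem_span {s t : S} (r : S) (hr : r = s ∨ r = t) (φ : S → ℝ) :
    M.dualReflection r φ - φ ∈ Submodule.span ℝ {M.titsForm s, M.titsForm t} := by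
  rw [dualReflection_apply, sub_sub_cancel_left, ← neg_smul]
  rcases hr with rfl | rfl
  exacts [Submodule.smul_mem _ _ (Submodule.subset_span (Set.mem_insert _ _)),
    Submodule.smul_mem _ _ (Submodule.subset_span (Set.mem_insert_of_mem _ rfl))]

/-- Coordinate `φ ↦ φ s + φ t · e^{iπ/m}` (`m = M s t`) on the plane spanned by `B(e_s, ·)` and
`B(e_t, ·)`, in which `σ_s σ_t` becomes multiplication by `e^{2πi/m}`. -/
noncomputable def planeCoord (s t : S) : (S → ℝ) →ₗ[ℝ] ℂ where
  toFun φ := φ s + φ t * exp (↑(π / M s t) * I)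
  map_add' φ ψ := by simp only [Pi.add_apply, ofReal_add]; ring
  map_smul' a φ := by simp only [Pi.smul_apply, smul_eq_mul, ofReal_mul, RingHom.id_apply,
    Complex.real_smul]; ring

theorem planeCoord_apply (s t : S) (φ : S → ℝ) :
    M.planeCoord s t φ = φ s + φ t * exp (↑(π / M s t) * I) :=
  rfl

theorem planeCoord_dualReflection (s t : S) (φ : S → ℝ) :
    M.planeCoord s t (M.dualReflection s φ) =
      exp (↑(π / M s t) * I) * M.planeCoord t s φ := by
  simp only [planeCoord_apply, dualReflection_apply, Pi.sub_apply, Pi.smul_apply, smul_eq_mul,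
    titsForm_self, M.symmetric t s]
  simp only [titsForm, ofReal_sub, ofReal_mul, ofReal_neg, ofReal_ofNat, ofReal_one]
  linear_combination (φ s : ℂ) * two_cos_mul_exp_mul_I (π / M s t)

theorem dualReflection_mul_self (s : S) : M.dualReflection s * M.dualReflection s = 1 :=
  Equiv.ext (Function.Involutive.toPerm_involutive _)

theorem disjoint_span_ker_planeCoord {s t : S} (hst : 2 ≤ M s t) :
    Disjoint (Submodule.span ℝ {M.titsForm s, M.titsForm t})
      (LinearMap.ker (M.planeCoord s t)) := by
  rw [Submodule.disjoint_def]
  rintro _ hψ hker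
  obtain ⟨a, b, rfl⟩ := Submodule.mem_span_pair.mp hψ
  have hsin : Real.sin (π / M s t) ≠ 0 :=
    (Real.sin_pos_of_pos_of_lt_pi (by positivity)
      (div_lt_self pi_pos (by exact_mod_cast hst))).ne'
  rw [LinearMap.mem_ker, planeCoord_apply] at hker
  set θ := π / M s t
  have hc : M.titsForm s t = -Real.cos θ := rfl
  have hre := congrArg Complex.re hker
  have him := congrArg Complex.im hker
  simp only [Pi.add_apply, Pi.smul_apply, smul_eq_mul, titsForm_self, titsForm_comm M t s, hc,
    add_re, add_im, mul_re, mul_im, ofReal_re, ofReal_im, exp_ofReal_mul_I_re,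
    exp_ofReal_mul_I_im, zero_re, zero_im] at hre him
  have ha : a = 0 := by
    have h : a * Real.sin θ ^ 2 = 0 := by linear_combination hre + a * Real.sin_sq_add_cos_sq θ
    simpa [hsin] using h
  have hb : b = 0 := by
    subst ha
    simpa [hsin] using him
  simp [ha, hb]

theorem dualReflection_mul_pow_eq_one {s t : S} (hst : 2 ≤ M s t) :
    (M.dualReflection s * M.dualReflection t) ^ M s t = 1 := by
  set T := M.dualReflection s * M.dualReflection t
  set u := exp (↑(π / M s t) * I)
  have hspan (n : ℕ) (φ : S → ℝ) :
      (T ^ n) φ - φ ∈ Submodule.span ℝ {M.titsForm s, M.titsForm t} := by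
    induction n generalizing φ with
    | zero => simp
    | succ n ih =>
      rw [pow_succ, Equiv.Perm.mul_apply, ← sub_add_sub_cancel _ (T φ)]
      refine add_mem (ih _) ?_
      rw [Equiv.Perm.mul_apply, ← sub_add_sub_cancel _ (M.dualReflection t φ)]
      exact add_mem (M.dualReflection_sub_self_mem_span s (.inl rfl) _)
        (M.dualReflection_sub_self_mem_span t (.inr rfl) _)
  have hrot (n : ℕ) (φ : S → ℝ) :
      M.planeCoord s t ((T ^ n) φ) = u ^ (2 * n) * M.planeCoord s t φ := by
    induction n generalizing φ with
    | zero => simp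
    | succ n ih =>
      rw [pow_succ, Equiv.Perm.mul_apply, ih, Equiv.Perm.mul_apply, planeCoord_dualReflection,
        planeCoord_dualReflection, M.symmetric t s]
      ring
  have hu : u ^ (2 * M s t) = 1 := by
    rw [← Complex.exp_nat_mul, ← Complex.exp_two_pi_mul_I]
    congr 1
    have : (M s t : ℂ) ≠ 0 := by exact_mod_cast (by omega : M s t ≠ 0)
    push_cast
    field_simp
  refine Equiv.ext fun φ => sub_eq_zero.mp ?_
  rw [Equiv.Perm.one_apply]
  refine Submodule.disjoint_def.mp (M.disjoint_span_ker_planeCoord hst) _ (hspan _ φ) ?_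
  rw [LinearMap.mem_ker, map_sub, hrot, hu, one_mul, sub_self]

theorem isLiftable_dualReflection : M.IsLiftable M.dualReflection := by
  intro s t
  rcases eq_or_ne s t with rfl | hst
  · rw [M.diagonal, pow_one, dualReflection_mul_self]
  rcases Nat.eq_zero_or_pos (M s t) with h | h
  · rw [h, pow_zero]
  · exact M.dualReflection_mul_pow_eq_one (by have := M.off_diagonal s t hst; omega)

theorem dualReflection_mem_stabilizer_iff [DecidableEq S] (s s₀ : S) :
    M.dualReflection s ∈ MulAction.stabilizer (Equiv.Perm (S → ℝ)) (Pi.single s₀ 1 : S → ℝ) ↔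
      s ≠ s₀ := by
  rw [MulAction.mem_stabilizer_iff, Equiv.Perm.smul_def, dualReflection_apply]
  constructor
  · rintro h rfl
    have := congrFun h s
    norm_num at this
  · intro h
    simp [h]

end CoxeterMatrix

noncomputable def CoxeterSystem.dualTitsRep {S W : Type*} [Group W] {M : CoxeterMatrix S}
    (cs : CoxeterSystem M W) : W →* Equiv.Perm (S → ℝ) :=
  cs.lift ⟨M.dualReflection, M.isLiftable_dualReflection⟩

theorem artin_word_ne_one_of_singleton_block_general {S : Type*}
    (M : CoxeterMatrix S)
    {k : ℕ} (i : Fin k → S) (ε : Fin k → ℤ) (hε : ∀ j, ε j = 1 ∨ ε j = -1)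
    (hone : ∃ j : Fin k, Nat.card {l : Fin k // i l = i j} = 1) :
    (List.ofFn fun j => artinGen M (i j) ^ ε j).prod ≠ 1 := by
  classical
  obtain ⟨j₀, hj₀⟩ := hone
  have hunique (l : Fin k) (hl : i l = i j₀) : l = j₀ :=
    congrArg Subtype.val ((Nat.card_eq_one_iff_unique.mp hj₀).1.elim ⟨l, hl⟩ ⟨j₀, rfl⟩)
  let cs := M.toCoxeterSystem
  let K := (MulAction.stabilizer (Equiv.Perm (S → ℝ)) (Pi.single (i j₀) 1 : S → ℝ)).comap
    (cs.dualTitsRep.comp cs.artinGroupHom)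
  have hK (s : S) : artinGen M s ∈ K ↔ s ≠ i j₀ := by
    simp [K, CoxeterSystem.dualTitsRep, M.dualReflection_mem_stabilizer_iff]
  have hzpow (j : Fin k) : artinGen M (i j) ^ ε j ∈ K ↔ artinGen M (i j) ∈ K := by
    rcases hε j with h | h <;> simp [h]
  intro h
  have hmem := (K.list_prod_ofFn_mem_iff _ j₀ fun j hj =>
    (hzpow j).2 ((hK _).2 fun h' => hj (hunique j h'))).1 (h ▸ K.one_mem)
  exact (hK _).1 ((hzpow j₀).1 hmem) rfl

/-- Let `M` be a Coxeter matrix of extra-large type (`M s t = 0` or `M s t ≥ 4` for `s ≠ t`,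
`0` encoding `∞`) on a countable type `S`, with Artin group `A` and generators `a`.  If in the
word `(a_{i₁}^{ε₁}, …, a_{i_k}^{ε_k})` some letter index appears exactly once (the associated
partition has a one-element block), then `a_{i₁}^{ε₁} ⋯ a_{i_k}^{ε_k} ≠ 1` in `A`. -/
theorem artin_word_ne_one_of_singleton_block {S : Type*} [Countable S]
    (M : CoxeterMatrix S) (hM : ∀ s t : S, s ≠ t → M s t = 0 ∨ 4 ≤ M s t)
    {k : ℕ} (i : Fin k → S) (ε : Fin k → ℤ) (hε : ∀ j, ε j = 1 ∨ ε j = -1)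
    (hone : ∃ j : Fin k, Nat.card {l : Fin k // i l = i j} = 1) :
    (List.ofFn fun j => artinGen M (i j) ^ ε j).prod ≠ 1 :=
  artin_word_ne_one_of_singleton_block_general M i ε hε hone
end
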